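/- Let φ : X → Y be an open code between shift spaces with Y irreducible. If φ is bi-closing, then φ is constant-to-one (every fiber has the same finite cardinality). -/

import Mathlib

open Set Function Filter

variable {A : Type*} {B : Type*} {C : Type*}

/-- The shift map on the full shift. -/
def shiftMap (x : ℤ → A) : ℤ → A := fun i => x (i + 1)

/-- A shift space (subshift): a closed shift-invariant subset of the full shift. -/
def IsSubshift [TopologicalSpace A] (X : Set (ℤ → A)) : Prop :=
  IsClosed X ∧ shiftMap '' X = X

/-- The word `w` occurs in `x` at position `k`. -/
def OccursAt (x : ℤ → A) (k : ℤ) (w : List A) : Prop :=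
  ∀ i : Fin w.length, x (k + ((i : ℕ) : ℤ)) = w.get i

/-- The word `w` belongs to the language of `X`. -/
def WordIn (X : Set (ℤ → A)) (w : List A) : Prop :=
  ∃ x ∈ X, ∃ k : ℤ, OccursAt x k w

/-- Irreducibility of a shift space. -/
def IrreducibleSubshift (X : Set (ℤ → A)) : Prop :=
  ∀ u v : List A, WordIn X u → WordIn X v → ∃ w : List A, WordIn X (u ++ w ++ v)

/-- Nonwandering shift space. -/
def NonwanderingSubshift (X : Set (ℤ → A)) : Prop :=
  ∀ u : List A, WordIn X u → ∃ w : List A, WordIn X (u ++ w ++ u)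

/-- A shift of finite type: defined by a finite set of forbidden words. -/
def IsSFT (X : Set (ℤ → A)) : Prop :=
  ∃ F : Finset (List A), X = {x : ℤ → A | ∀ w ∈ F, ∀ k : ℤ, ¬ OccursAt x k w}

/-- A (sliding block) code: a continuous shift-commuting map between shift spaces. -/
def IsCode [TopologicalSpace A] [TopologicalSpace B]
    {X : Set (ℤ → A)} {Y : Set (ℤ → B)} (φ : X → Y) : Prop :=
  Continuous φ ∧
    ∀ (x : X) (hx : shiftMap (x : ℤ → A) ∈ X),
      ((φ ⟨shiftMap (x : ℤ → A), hx⟩ : Y) : ℤ → B) = shiftMap ((φ x : Y) : ℤ → B)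

/-- A sofic shift: a factor of a shift of finite type. -/
def IsSofic [TopologicalSpace A] (Y : Set (ℤ → A)) : Prop :=
  ∃ (n : ℕ) (Z : Set (ℤ → Fin n)), IsSubshift Z ∧ IsSFT Z ∧
    ∃ ψ : Z → Y, IsCode ψ ∧ Function.Surjective ψ

/-- Two points are left asymptotic if they agree on all sufficiently negative coordinates. -/
def LeftAsymptotic (x y : ℤ → A) : Prop := ∃ N : ℤ, ∀ i ≤ N, x i = y i

/-- Two points are right asymptotic if they agree on all sufficiently positive coordinates. -/
def RightAsymptotic (x y : ℤ → A) : Prop := ∃ N : ℤ, ∀ i, N ≤ i → x i = y i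

/-- A code is right closing if it never collapses two distinct left asymptotic points. -/
def RightClosing {X : Set (ℤ → A)} {Y : Set (ℤ → B)} (φ : X → Y) : Prop :=
  ∀ x x' : X, LeftAsymptotic (x : ℤ → A) (x' : ℤ → A) → φ x = φ x' → x = x'

/-- A code is left closing if it never collapses two distinct right asymptotic points. -/
def LeftClosing {X : Set (ℤ → A)} {Y : Set (ℤ → B)} (φ : X → Y) : Prop :=
  ∀ x x' : X, RightAsymptotic (x : ℤ → A) (x' : ℤ → A) → φ x = φ x' → x = x'

/-- Bi-closing: both right and left closing. -/
def BiClosing {X : Set (ℤ → A)} {Y : Set (ℤ → B)} (φ : X → Y) : Prop :=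
  RightClosing φ ∧ LeftClosing φ

/-- Finite-to-one map. -/
def FiniteToOne {α β : Type*} (φ : α → β) : Prop := ∀ y : β, (φ ⁻¹' {y}).Finite

/-- Every fiber has exactly `d` elements. -/
def ExactlyDToOne {α β : Type*} (φ : α → β) (d : ℕ) : Prop :=
  ∀ y : β, (φ ⁻¹' {y}).Finite ∧ Nat.card (φ ⁻¹' {y}) = d

/-- Constant-to-one map. -/
def ConstantToOne {α β : Type*} (φ : α → β) : Prop := ∃ d : ℕ, ExactlyDToOne φ d

/-- A doubly transitive point: every word of `Y` occurs infinitely often to the left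
and to the right. -/
def DoublyTransitive (Y : Set (ℤ → A)) (y : ℤ → A) : Prop :=
  ∀ w : List A, WordIn Y w → ∀ N : ℤ,
    (∃ k ≥ N, OccursAt y k w) ∧ (∃ k ≤ N, OccursAt y k w)

/-- The maximal nonwandering subshift of `X`. -/
def OmegaSet [TopologicalSpace A] (X : Set (ℤ → A)) : Set (ℤ → A) :=
  ⋃₀ {Z : Set (ℤ → A) | Z ⊆ X ∧ IsSubshift Z ∧ NonwanderingSubshift Z}

/-- Topological entropy of a subshift, via the growth rate of the number of words. -/
noncomputable def subshiftEntropy (X : Set (ℤ → A)) : ℝ :=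
  Filter.limsup
    (fun n : ℕ => Real.log (Nat.card {w : List A | w.length = n ∧ WordIn X w}) / n)
    Filter.atTop

/-- An irreducible component of `X`: a maximal nonempty irreducible subshift of `X`. -/
def IsIrreducibleComponent [TopologicalSpace A] (X X₀ : Set (ℤ → A)) : Prop :=
  X₀ ⊆ X ∧ IsSubshift X₀ ∧ X₀.Nonempty ∧ IrreducibleSubshift X₀ ∧
    ∀ Z : Set (ℤ → A), Z ⊆ X → IsSubshift Z → IrreducibleSubshift Z → X₀ ⊆ Z → Z = X₀

-- The metric on a shift space: `d(x,y) = 2^{-k}` where `k` is maximal with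
-- `x` and `y` agreeing on `[-k,k]`, and `0` if `x = y`.
open Classical in
noncomputable def shiftDist (x y : ℤ → A) : ℝ :=
  if x = y then 0
  else (2 : ℝ) ^ (-((sSup {n : ℕ | ∀ i : ℤ, |i| ≤ (n : ℤ) → x i = y i} : ℕ) : ℤ))

/-!
Compactness turns right and left closing into a uniform delay: there is `N` such that two points
of one fiber that agree on `[-N, N]` are equal. So `#φ⁻¹{y}` is the number of words `w` on
`[-N, N]` such that `y` lies in the image of the cylinder of `w`; as `φ` is open and `X` compact,
these images are clopen, and `y ↦ #φ⁻¹{y}` is locally constant. It is also shift-invariant, and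
on an irreducible shift space such a function is constant: a point of `Y` containing a word that
joins the central words of `y` and `y'` has one translate near `y` and another near `y'`.
-/

open Topology

def shiftBy (k : ℤ) (x : ℤ → A) : ℤ → A := fun i => x (i + k)

@[simp]
lemma shiftBy_apply (k : ℤ) (x : ℤ → A) (i : ℤ) : shiftBy k x i = x (i + k) := rfl

@[simp]
lemma shiftBy_zero (x : ℤ → A) : shiftBy 0 x = x := by
  funext i; simp

lemma shiftBy_shiftBy (k l : ℤ) (x : ℤ → A) : shiftBy k (shiftBy l x) = shiftBy (k + l) x := by
  funext i; simp [add_assoc]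

namespace IsSubshift

variable [TopologicalSpace A] {X : Set (ℤ → A)}

lemma shiftBy_mem (hX : IsSubshift X) (k : ℤ) {x : ℤ → A} (hx : x ∈ X) : shiftBy k x ∈ X := by
  induction k using Int.induction_on generalizing x with
  | zero => simpa using hx
  | succ i ih =>
    rw [add_comm, ← shiftBy_shiftBy]
    exact hX.2 ▸ mem_image_of_mem _ (ih hx)
  | pred i ih =>
    rw [← hX.2] at hx
    obtain ⟨z, hz, rfl⟩ := hx
    have hz' : shiftBy (-1) (shiftMap z) = z := by funext j; simp [shiftMap]
    rw [sub_eq_add_neg, ← shiftBy_shiftBy, hz']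
    exact ih hz

def shift (hX : IsSubshift X) (k : ℤ) : Equiv.Perm X where
  toFun x := ⟨shiftBy k x, hX.shiftBy_mem k x.2⟩
  invFun x := ⟨shiftBy (-k) x, hX.shiftBy_mem (-k) x.2⟩
  left_inv x := by ext1; simp [shiftBy_shiftBy]
  right_inv x := by ext1; simp [shiftBy_shiftBy]

@[simp]
lemma coe_shift (hX : IsSubshift X) (k : ℤ) (x : X) : (hX.shift k x).1 = shiftBy k x.1 := rfl

lemma shift_shift (hX : IsSubshift X) (k l : ℤ) (x : X) :
    hX.shift k (hX.shift l x) = hX.shift (k + l) x :=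
  Subtype.ext (shiftBy_shiftBy k l x.1)

@[simp]
lemma shift_zero (hX : IsSubshift X) (x : X) : hX.shift 0 x = x :=
  Subtype.ext (shiftBy_zero x.1)

end IsSubshift

lemma IsCode.map_shift [TopologicalSpace A] [TopologicalSpace B] {X : Set (ℤ → A)}
    {Y : Set (ℤ → B)} {φ : X → Y} (hφ : IsCode φ) (hX : IsSubshift X) (k : ℤ) (x : X) :
    (φ (hX.shift k x)).1 = shiftBy k (φ x).1 := by
  let Commutes (k : ℤ) : Prop := ∀ x, (φ (hX.shift k x)).1 = shiftBy k (φ x).1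
  have add : ∀ k l, Commutes k → Commutes l → Commutes (k + l) := fun k l hk hl x => by
    rw [← hX.shift_shift, hk, hl, shiftBy_shiftBy]
  have one : Commutes 1 := fun x => hφ.2 x _
  have neg_one : Commutes (-1) := fun x => by
    obtain ⟨x, rfl⟩ := (hX.shift 1).surjective x
    rw [one, shiftBy_shiftBy, hX.shift_shift]
    simp
  induction k using Int.induction_on generalizing x with
  | zero => simp
  | succ i ih => exact add _ _ ih one x
  | pred i ih => exact add _ _ ih neg_one x

section Closing

variable [TopologicalSpace A] [DiscreteTopology A] {X : Set (ℤ → A)} [CompactSpace X]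

lemma exists_eqOn_imp_eq_of_eqOn_iUnion {β : Type*} [TopologicalSpace β] [T2Space β]
    {φ : X → β} (hφ : Continuous φ) {s : ℕ → Set ℤ} (hs : Monotone s) (p : ℤ)
    (h : ∀ x x' : X, φ x = φ x' → EqOn x.1 x'.1 (⋃ n, s n) → x.1 p = x'.1 p) :
    ∃ n, ∀ x x' : X, φ x = φ x' → EqOn x.1 x'.1 (s n) → x.1 p = x'.1 p := by
  have hval : ∀ i, Continuous fun x : X => x.1 i := fun i =>
    (continuous_apply i).comp continuous_subtype_val
  have hcoord : ∀ i, Continuous fun q : X × X => (q.1.1 i, q.2.1 i) := fun i =>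
    ((hval i).comp continuous_fst).prodMk ((hval i).comp continuous_snd)
  let K : Set (X × X) := {q | φ q.1 = φ q.2 ∧ q.1.1 p ≠ q.2.1 p}
  let U (n : ℕ) : Set (X × X) := ⋃ i ∈ s n, {q | q.1.1 i ≠ q.2.1 i}
  have hK : IsCompact K :=
    ((isClosed_eq (hφ.comp continuous_fst) (hφ.comp continuous_snd)).inter
      ((isClosed_discrete {a : A × A | a.1 ≠ a.2}).preimage (hcoord p))).isCompact
  have hU : ∀ n, IsOpen (U n) := fun n =>
    isOpen_biUnion fun i _ => (isOpen_discrete {a : A × A | a.1 ≠ a.2}).preimage (hcoord i)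
  have hKU : K ⊆ ⋃ n, U n := by
    rintro ⟨x, x'⟩ ⟨hxx', hp⟩
    by_contra hcover
    simp only [U, mem_iUnion, not_exists] at hcover
    refine hp (h x x' hxx' fun i hi => ?_)
    obtain ⟨n, hn⟩ := mem_iUnion.1 hi
    simpa using hcover n i hn
  have hUmono : Monotone U := fun m n hmn => biUnion_subset_biUnion_left (hs hmn)
  obtain ⟨n, hn⟩ := hK.elim_directed_cover U hU hKU hUmono.directed_le
  refine ⟨n, fun x x' hxx' hagree => ?_⟩
  by_contra hp
  obtain ⟨i, hi, hne⟩ := mem_iUnion₂.1 (hn (show (x, x') ∈ K from ⟨hxx', hp⟩))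
  exact hne (hagree hi)

variable [TopologicalSpace B] [T2Space B] {Y : Set (ℤ → B)} {φ : X → Y}

lemma RightClosing.exists_delay (hrc : RightClosing φ) (hφ : IsCode φ) (hX : IsSubshift X) :
    ∃ N : ℕ, ∀ x x' : X, φ x = φ x' → ∀ j : ℤ,
      EqOn x.1 x'.1 (Icc (j - N) j) → x.1 (j + 1) = x'.1 (j + 1) := by
  obtain ⟨N, hN⟩ := exists_eqOn_imp_eq_of_eqOn_iUnion hφ.1 (s := fun n : ℕ => Icc (-(n : ℤ)) 0)
    (fun m n hmn => Icc_subset_Icc_left (by omega)) 1 fun x x' hxx' hagree => by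
      refine congrArg (fun x : X => x.1 1) (hrc x x' ⟨0, fun i hi => hagree ?_⟩ hxx')
      exact mem_iUnion.2 ⟨i.natAbs, by simp only [mem_Icc]; omega⟩
  refine ⟨N, fun x x' hxx' j hagree => ?_⟩
  have hshift : φ (hX.shift j x) = φ (hX.shift j x') :=
    Subtype.ext (by rw [hφ.map_shift, hφ.map_shift, hxx'])
  have := hN _ _ hshift fun i hi => by
    simp only [mem_Icc] at hi
    simpa using hagree (by simp only [mem_Icc]; omega : i + j ∈ Icc (j - N) j)
  simpa [add_comm] using this

lemma LeftClosing.exists_delay (hlc : LeftClosing φ) (hφ : IsCode φ) (hX : IsSubshift X) :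
    ∃ N : ℕ, ∀ x x' : X, φ x = φ x' → ∀ j : ℤ,
      EqOn x.1 x'.1 (Icc j (j + N)) → x.1 (j - 1) = x'.1 (j - 1) := by
  obtain ⟨N, hN⟩ := exists_eqOn_imp_eq_of_eqOn_iUnion hφ.1 (s := fun n : ℕ => Icc 0 (n : ℤ))
    (fun m n hmn => Icc_subset_Icc_right (by omega)) (-1) fun x x' hxx' hagree => by
      refine congrArg (fun x : X => x.1 (-1)) (hlc x x' ⟨0, fun i hi => hagree ?_⟩ hxx')
      exact mem_iUnion.2 ⟨i.natAbs, by simp only [mem_Icc]; omega⟩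
  refine ⟨N, fun x x' hxx' j hagree => ?_⟩
  have hshift : φ (hX.shift j x) = φ (hX.shift j x') :=
    Subtype.ext (by rw [hφ.map_shift, hφ.map_shift, hxx'])
  have := hN _ _ hshift fun i hi => by
    simp only [mem_Icc] at hi
    simpa using hagree (by simp only [mem_Icc]; omega : i + j ∈ Icc j (j + N))
  simpa [neg_add_eq_sub] using this

end Closing

lemma eq_of_eqOn_Icc_of_delay {f g : ℤ → A} {N : ℕ}
    (hright : ∀ j, EqOn f g (Icc (j - N) j) → f (j + 1) = g (j + 1))
    (hleft : ∀ j, EqOn f g (Icc j (j + N)) → f (j - 1) = g (j - 1))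
    (h : EqOn f g (Icc (-N) N)) : f = g := by
  have up : ∀ j ≥ (N : ℤ), EqOn f g (Icc (-N) j) := by
    intro j hj
    induction j, hj using Int.leInduction with
    | base => exact h
    | succ j hj ih =>
      intro i hi
      rcases (mem_Icc.1 hi).2.lt_or_eq with hlt | rfl
      · exact ih ⟨hi.1, by omega⟩
      · exact hright j (ih.mono (Icc_subset_Icc_left (by omega)))
  have down : ∀ j ≤ -(N : ℤ), EqOn f g (Icc j N) := by
    intro j hj
    induction j, hj using Int.leInductionDown with
    | base => exact h
    | pred j hj ih =>
      intro i hi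
      rcases (mem_Icc.1 hi).1.lt_or_eq with hlt | rfl
      · exact ih ⟨by omega, hi.2⟩
      · exact hleft j (ih.mono (Icc_subset_Icc_right (by omega)))
  funext i
  rcases le_total i (-N) with hi | hi
  · exact down i hi ⟨le_rfl, by omega⟩
  · exact up (max i N) (le_max_right _ _) ⟨hi, le_max_left _ _⟩

def window (N : ℕ) (x : ℤ → A) : Icc (-(N : ℤ)) N → A := fun i => x i

lemma window_eq_window_iff {N : ℕ} {x x' : ℤ → A} :
    window N x = window N x' ↔ EqOn x x' (Icc (-(N : ℤ)) N) := by
  simp [funext_iff, window, EqOn]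

lemma continuous_window [TopologicalSpace A] (N : ℕ) : Continuous (window (A := A) N) :=
  continuous_pi fun _ => continuous_apply _

lemma BiClosing.exists_injOn_window [TopologicalSpace A] [DiscreteTopology A]
    [TopologicalSpace B] [T2Space B] {X : Set (ℤ → A)} [CompactSpace X]
    {Y : Set (ℤ → B)} {φ : X → Y} (hbc : BiClosing φ) (hφ : IsCode φ) (hX : IsSubshift X) :
    ∃ N : ℕ, ∀ y, InjOn (fun x : X => window N x.1) (φ ⁻¹' {y}) := by
  obtain ⟨N₁, hN₁⟩ := hbc.1.exists_delay hφ hX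
  obtain ⟨N₂, hN₂⟩ := hbc.2.exists_delay hφ hX
  refine ⟨max N₁ N₂, fun y x hx x' hx' hw => Subtype.ext ?_⟩
  have hxx' : φ x = φ x' := hx.trans hx'.symm
  refine eq_of_eqOn_Icc_of_delay (N := max N₁ N₂) (fun j hj => hN₁ x x' hxx' j (hj.mono ?_))
    (fun j hj => hN₂ x x' hxx' j (hj.mono ?_)) (window_eq_window_iff.1 hw)
  · exact Icc_subset_Icc_left (by omega)
  · exact Icc_subset_Icc_right (by omega)

lemma isLocallyConstant_setOf_mem {α ι : Type*} [TopologicalSpace α] [Finite ι]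
    {K : ι → Set α} (hK : ∀ i, IsClopen (K i)) : IsLocallyConstant fun x => {i | x ∈ K i} := by
  refine (IsLocallyConstant.iff_eventually_eq _).2 fun x => ?_
  have hmem : ∀ i, ∀ᶠ z in 𝓝 x, (z ∈ K i ↔ x ∈ K i) := fun i => by
    by_cases hx : x ∈ K i
    · filter_upwards [(hK i).isOpen.mem_nhds hx] with z hz using iff_of_true hz hx
    · filter_upwards [(hK i).compl.isOpen.mem_nhds hx] with z hz using iff_of_false hz hx
  filter_upwards [eventually_all.2 hmem] with z hz
  ext i
  exact hz i

lemma card_fiber_eq_of_injOn_window {X : Set (ℤ → A)} {β : Type*} {φ : X → β} {N : ℕ} {y : β}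
    (h : InjOn (fun x : X => window N x.1) (φ ⁻¹' {y})) :
    Nat.card (φ ⁻¹' {y}) = Nat.card {w | y ∈ φ '' {x : X | window N x.1 = w}} := by
  rw [Nat.card_coe_set_eq, Nat.card_coe_set_eq, ← h.ncard_image]
  congr 1
  ext w
  simp [and_comm]

lemma isLocallyConstant_card_fiber [TopologicalSpace A] [DiscreteTopology A] [Finite A]
    {X : Set (ℤ → A)} [CompactSpace X] {β : Type*} [TopologicalSpace β] [T2Space β] {φ : X → β}
    {N : ℕ} (hφ : Continuous φ) (hopen : IsOpenMap φ)
    (h : ∀ y, InjOn (fun x : X => window N x.1) (φ ⁻¹' {y})) :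
    IsLocallyConstant fun y => Nat.card (φ ⁻¹' {y}) := by
  have hK : ∀ w, IsClopen (φ '' {x : X | window N x.1 = w}) := fun w => by
    have hcyl : IsClopen {x : X | window N x.1 = w} :=
      (isClopen_discrete {w}).preimage ((continuous_window N).comp continuous_subtype_val)
    exact ⟨(hcyl.1.isCompact.image hφ).isClosed, hopen _ hcyl.2⟩
  simp_rw [card_fiber_eq_of_injOn_window (h _)]
  exact (isLocallyConstant_setOf_mem hK).comp fun s => Nat.card s

lemma IsCode.card_fiber_shift [TopologicalSpace A] [TopologicalSpace B] {X : Set (ℤ → A)}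
    {Y : Set (ℤ → B)} {φ : X → Y} (hφ : IsCode φ) (hX : IsSubshift X) (hY : IsSubshift Y)
    (k : ℤ) (y : Y) : Nat.card (φ ⁻¹' {hY.shift k y}) = Nat.card (φ ⁻¹' {y}) := by
  refine Nat.card_congr ((hX.shift k).subtypeEquiv fun x => ?_).symm
  have : φ (hX.shift k x) = hY.shift k (φ x) := Subtype.ext (hφ.map_shift hX k x)
  simp [this]

def centralWord (n : ℕ) (y : ℤ → A) : List A :=
  List.ofFn fun i : Fin (2 * n + 1) => y (i - n)

lemma occursAt_centralWord (n : ℕ) (y : ℤ → A) : OccursAt y (-n) (centralWord n y) := by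
  intro i
  rw [List.get_eq_getElem]
  simp only [centralWord, List.getElem_ofFn]
  ring_nf

lemma OccursAt.eqOn_centralWord {z y : ℤ → A} {k : ℤ} {n : ℕ}
    (h : OccursAt z k (centralWord n y)) : EqOn (shiftBy (k + n) z) y (Icc (-n) n) := by
  rintro i ⟨hi₁, hi₂⟩
  have := h ⟨(i + n).toNat, by simp [centralWord]; omega⟩
  rw [List.get_eq_getElem] at this
  simp only [centralWord, List.getElem_ofFn] at this
  rw [shiftBy_apply]
  convert this using 2 <;> omega

lemma OccursAt.of_append {x : ℤ → A} {k : ℤ} {u v : List A} (h : OccursAt x k (u ++ v)) :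
    OccursAt x k u ∧ OccursAt x (k + u.length) v := by
  constructor
  · intro i
    simpa [List.getElem_append_left] using h ⟨i, by simp; omega⟩
  · intro i
    simpa [add_assoc, List.getElem_append_right] using h ⟨u.length + i, by simp⟩

lemma exists_eqOn_Icc_of_eventually [TopologicalSpace A] {X : Set (ℤ → A)} {x : X}
    {P : X → Prop} (h : ∀ᶠ z in 𝓝 x, P z) :
    ∃ n : ℕ, ∀ z : X, EqOn z.1 x.1 (Icc (-(n : ℤ)) n) → P z := by
  rw [nhds_subtype, eventually_comap, nhds_pi, Filter.Eventually, Filter.mem_pi] at h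
  obtain ⟨I, hI, t, ht, hIt⟩ := h
  obtain ⟨n, hn⟩ := (hI.image Int.natAbs).bddAbove
  refine ⟨n, fun z hz => hIt (fun i hi => ?_) z rfl⟩
  have hin : i.natAbs ≤ n := hn (mem_image_of_mem _ hi)
  rw [hz ⟨by omega, by omega⟩]
  exact mem_of_mem_nhds (ht i)

lemma IrreducibleSubshift.apply_eq_of_isLocallyConstant [TopologicalSpace A] {Y : Set (ℤ → A)}
    (hirr : IrreducibleSubshift Y) (hY : IsSubshift Y) {γ : Type*} {f : Y → γ}
    (hf : IsLocallyConstant f) (hinv : ∀ k y, f (hY.shift k y) = f y) (y y' : Y) :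
    f y = f y' := by
  obtain ⟨n, hn⟩ := exists_eqOn_Icc_of_eventually (hf.eventually_eq y)
  obtain ⟨n', hn'⟩ := exists_eqOn_Icc_of_eventually (hf.eventually_eq y')
  obtain ⟨w, z, hz, k, hocc⟩ := hirr (centralWord n y.1) (centralWord n' y'.1)
    ⟨y.1, y.2, _, occursAt_centralWord n y.1⟩ ⟨y'.1, y'.2, _, occursAt_centralWord n' y'.1⟩
  obtain ⟨huw, hv⟩ := hocc.of_append
  have hu := huw.of_append.1
  set L : ℤ := ((centralWord n y.1 ++ w).length : ℤ)
  calc f y = f (hY.shift (k + n) ⟨z, hz⟩) := (hn _ hu.eqOn_centralWord).symm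
    _ = f (hY.shift (L + n' - n) (hY.shift (k + n) ⟨z, hz⟩)) := (hinv _ _).symm
    _ = f (hY.shift (k + L + n') ⟨z, hz⟩) := by rw [hY.shift_shift]; ring_nf
    _ = f y' := hn' _ hv.eqOn_centralWord

lemma IsSubshift.compactSpace [TopologicalSpace A] [Finite A]
    {X : Set (ℤ → A)} (hX : IsSubshift X) : CompactSpace X :=
  isCompact_iff_compactSpace.1 hX.1.isCompact

lemma constantToOne_of_card_eq {α β : Type*} {f : α → β} (hfin : FiniteToOne f)
    (h : ∀ y y', Nat.card (f ⁻¹' {y}) = Nat.card (f ⁻¹' {y'})) : ConstantToOne f := by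
  rcases isEmpty_or_nonempty β with hβ | ⟨⟨y₀⟩⟩
  · exact ⟨0, isEmptyElim⟩
  · exact ⟨_, fun y => ⟨hfin y, h y y₀⟩⟩

theorem open_biclosing_is_constant_to_one_general {A : Type*} {B : Type*} [Finite A] [TopologicalSpace A] [DiscreteTopology A]
    [TopologicalSpace B] [DiscreteTopology B]
    {X : Set (ℤ → A)} {Y : Set (ℤ → B)} (hX : IsSubshift X) (hY : IsSubshift Y)
    (φ : X → Y) (hφ : IsCode φ)
    (hopen : IsOpenMap φ) (hbc : BiClosing φ) (hYirr : IrreducibleSubshift Y) :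
    ConstantToOne φ := by
  have := hX.compactSpace
  obtain ⟨N, hN⟩ := hbc.exists_injOn_window hφ hX
  refine constantToOne_of_card_eq (fun y => Finite.of_finite_image (toFinite _) (hN y)) ?_
  exact hYirr.apply_eq_of_isLocallyConstant hY (isLocallyConstant_card_fiber hφ.1 hopen hN)
    (hφ.card_fiber_shift hX hY)

theorem open_biclosing_is_constant_to_one {A : Type*} {B : Type*} [Finite A] [TopologicalSpace A] [DiscreteTopology A]
    [Finite B] [TopologicalSpace B] [DiscreteTopology B]
    {X : Set (ℤ → A)} {Y : Set (ℤ → B)} (hX : IsSubshift X) (hY : IsSubshift Y)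
    (φ : X → Y) (hφ : IsCode φ)
    (hopen : IsOpenMap φ) (hbc : BiClosing φ) (hYirr : IrreducibleSubshift Y) :
    ConstantToOne φ :=
  open_biclosing_is_constant_to_one_general hX hY φ hφ hopen hbc hYirr
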